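/- arXiv:2011.01724 — 9 statements merged into one kernel-verified Lean document; each statement's English description precedes it below -/
import Mathlib

section
/- Finite abelian rack structures on a finite set X are in bijective correspondence with partitions X = X₁ ⊔ ⋯ ⊔ X_r together with families of permutations f_{ij} ∈ Sym(X_i) (1 ≤ i, j ≤ r) such that: (1) f_{ij} f_{ik} = f_{ik} f_{ij} for all i, j, k; (2) the group G_i = ⟨f_{ij} : 1 ≤ j ≤ r⟩ acts transitively on X_i; (3) every element of G_i with a fixed point in X_i is the identity. Under this correspondence, the rack operation is x ◁ y = f_{ij}(x) for x ∈ X_i, y ∈ X_j. The rack is a quandle if and only if f_{ii} = id for all i. -/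
/-- An abelian rack structure on `X`. -/
structure AbelianRack (X : Type*) where
  op : X → X → X
  self_distrib : ∀ x y z, op (op x y) z = op (op x z) (op y z)
  bij : ∀ y, Function.Bijective fun x => op x y
  abelian : ∀ a b c, op (op a b) c = op (op a c) b

/-- The combinatorial data: a partition of `X` (given as an equivalence relation, the
parts being the classes) together with permutations `f_{ij}` of the part `X_i` (encoded
as permutations of `X` indexed by representatives, fixing the complement of the part,
depending only on the classes of the indices) such that the `f_{ij}` with fixed first
index pairwise commute, the group `G_i = ⟨f_{ij} : j⟩` acts transitively on `X_i`, and
any element of `G_i` with a fixed point in `X_i` is the identity on `X_i`. -/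
structure AbelianRackData (X : Type*) where
  rel : X → X → Prop
  equiv : Equivalence rel
  f : X → X → Equiv.Perm X
  congr : ∀ x x' y y', rel x x' → rel y y' → f x y = f x' y'
  fix_outside : ∀ x y z, ¬ rel x z → f x y z = z
  maps_class : ∀ x y z, rel x z → rel x (f x y z)
  comm : ∀ x y y', f x y * f x y' = f x y' * f x y
  trans : ∀ x a b, rel x a → rel x b →
    ∃ g ∈ Subgroup.closure (Set.range (f x)), g a = b
  free : ∀ x, ∀ g ∈ Subgroup.closure (Set.range (f x)),
    (∃ a, rel x a ∧ g a = a) → ∀ b, rel x b → g b = b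

/-!
In an abelian rack `(a ◁ c) ◁ b = (a ◁ b) ◁ c = (a ◁ c) ◁ (b ◁ c)`, so right translation by
`b ◁ c` equals right translation by `b`: right translations are constant on the orbits `X_i` of
the translation group, and `f_{ij}` is the restriction to `X_i` of right translation by any
`y ∈ X_j`. The `f_{ij}` commute by the abelian law, they generate a transitive group on `X_i`
because the translation group is transitive there, and a transitive abelian permutation group
acts freely. Conversely `x ◁ y := f_{[x][y]} x` is self-distributive and abelian because the
`f_{ij}` commute, its right translations are injective hence bijective on a finite set, and by
transitivity of the `G_i` its orbits are the given parts.
-/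

open Equiv Subgroup

theorem Equivalence.rel_apply_of_mem_closure {α : Type*} {r : α → α → Prop}
    (hr : Equivalence r) {S : Set (Perm α)} (hS : ∀ σ ∈ S, ∀ a, r a (σ a))
    {g : Perm α} (hg : g ∈ closure S) (a : α) : r a (g a) := by
  induction hg using Subgroup.closure_induction generalizing a with
  | mem σ hσ => exact hS σ hσ a
  | one => exact hr.refl a
  | mul g h _ _ hg hh => exact hr.trans (hh a) (hg (h a))
  | inv g _ hg => simpa using hr.symm (hg (g⁻¹ a))

theorem Subgroup.exists_mem_closure_eqOn {α : Type*} {S T : Set (Perm α)} {s : Set α}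
    (hs : ∀ g ∈ closure S, Set.MapsTo g s s) (hST : ∀ σ ∈ S, ∃ τ ∈ T, Set.EqOn τ σ s)
    {g : Perm α} (hg : g ∈ closure S) : ∃ g' ∈ closure T, Set.EqOn g' g s := by
  induction hg using Subgroup.closure_induction with
  | mem σ hσ =>
    obtain ⟨τ, hτ, h⟩ := hST σ hσ
    exact ⟨τ, subset_closure hτ, h⟩
  | one => exact ⟨1, one_mem _, Set.eqOn_refl _ _⟩
  | mul g h hg hh ihg ihh =>
    obtain ⟨g', hg', eg⟩ := ihg
    obtain ⟨h', hh', eh⟩ := ihh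
    refine ⟨g' * h', mul_mem hg' hh', fun a ha => ?_⟩
    simp only [Perm.mul_apply, eh ha, eg (hs h hh ha)]
  | inv g hg ih =>
    obtain ⟨g', hg', eg⟩ := ih
    refine ⟨g'⁻¹, inv_mem hg', fun a ha => ?_⟩
    rw [Perm.inv_eq_iff_eq, eg (hs _ (inv_mem hg) ha)]
    exact (g.apply_symm_apply a).symm

theorem Subgroup.apply_eq_self_of_isMulCommutative {α : Type*} {H : Subgroup (Perm α)}
    [IsMulCommutative H] {s : Set α} (htrans : ∀ a ∈ s, ∀ b ∈ s, ∃ h ∈ H, h a = b)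
    {g : Perm α} (hg : g ∈ H) {a b : α} (ha : a ∈ s) (hb : b ∈ s) (hfix : g a = a) :
    g b = b := by
  obtain ⟨h, hh, rfl⟩ := htrans a ha b hb
  rw [← Perm.mul_apply, setLike_mul_comm hg hh, Perm.mul_apply, hfix]

attribute [ext] AbelianRack AbelianRackData

namespace AbelianRack

variable {X : Type*} (R : AbelianRack X)

noncomputable def rightPerm (y : X) : Perm X := Equiv.ofBijective (R.op · y) (R.bij y)

def translationGroup : Subgroup (Perm X) := closure (Set.range R.rightPerm)

lemma rightPerm_mem_translationGroup (y : X) : R.rightPerm y ∈ R.translationGroup :=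
  subset_closure ⟨y, rfl⟩

def SameOrbit (x z : X) : Prop := ∃ g ∈ R.translationGroup, g x = z

lemma sameOrbit_apply {g : Perm X} (hg : g ∈ R.translationGroup) (x : X) :
    R.SameOrbit x (g x) :=
  ⟨g, hg, rfl⟩

lemma sameOrbit_op (x y : X) : R.SameOrbit x (R.op x y) :=
  R.sameOrbit_apply (R.rightPerm_mem_translationGroup y) x

lemma sameOrbit_refl (x : X) : R.SameOrbit x x := ⟨1, one_mem _, rfl⟩

variable {R} in
lemma SameOrbit.symm {x z : X} (h : R.SameOrbit x z) : R.SameOrbit z x := by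
  obtain ⟨g, hg, rfl⟩ := h
  exact ⟨g⁻¹, inv_mem hg, g.symm_apply_apply x⟩

variable {R} in
lemma SameOrbit.trans {x y z : X} (h : R.SameOrbit x y) (h' : R.SameOrbit y z) :
    R.SameOrbit x z := by
  obtain ⟨g, hg, rfl⟩ := h
  obtain ⟨g', hg', rfl⟩ := h'
  exact ⟨g' * g, mul_mem hg' hg, rfl⟩

lemma sameOrbit_equivalence : Equivalence R.SameOrbit :=
  ⟨R.sameOrbit_refl, SameOrbit.symm, SameOrbit.trans⟩

lemma sameOrbit_apply_right_iff {g : Perm X} (hg : g ∈ R.translationGroup) {x z : X} :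
    R.SameOrbit x (g z) ↔ R.SameOrbit x z :=
  ⟨fun h => h.trans (R.sameOrbit_apply hg z).symm, fun h => h.trans (R.sameOrbit_apply hg z)⟩

lemma op_op_right (t b c : X) : R.op t (R.op b c) = R.op t b := by
  obtain ⟨a, rfl⟩ := (R.bij c).2 t
  rw [← R.self_distrib, R.abelian]

lemma rightPerm_eq_of_sameOrbit {b b' : X} (h : R.SameOrbit b b') :
    R.rightPerm b = R.rightPerm b' := by
  obtain ⟨g, hg, rfl⟩ := h
  have hker : Equivalence fun a a' => R.rightPerm a = R.rightPerm a' :=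
    ⟨fun _ => rfl, Eq.symm, Eq.trans⟩
  refine hker.rel_apply_of_mem_closure ?_ hg b
  rintro _ ⟨c, rfl⟩ b
  ext t
  exact (R.op_op_right t b c).symm

lemma op_eq_op_of_sameOrbit {b b' : X} (h : R.SameOrbit b b') (t : X) :
    R.op t b = R.op t b' :=
  DFunLike.congr_fun (R.rightPerm_eq_of_sameOrbit h) t

open Classical in
noncomputable def restrictedPerm (x y : X) : Perm X :=
  Perm.ofSubtype <| (R.rightPerm y).subtypePerm (p := R.SameOrbit x) fun _ =>
    R.sameOrbit_apply_right_iff (R.rightPerm_mem_translationGroup y)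

lemma restrictedPerm_apply_of_sameOrbit {x z : X} (h : R.SameOrbit x z) (y : X) :
    R.restrictedPerm x y z = R.op z y := by
  classical
  exact Perm.ofSubtype_subtypePerm_of_mem (p := R.SameOrbit x) _ h

lemma restrictedPerm_apply_of_not_sameOrbit {x z : X} (h : ¬ R.SameOrbit x z) (y : X) :
    R.restrictedPerm x y z = z := by
  classical
  exact Perm.ofSubtype_subtypePerm_of_not_mem (p := R.SameOrbit x) _ h

lemma restrictedPerm_self_apply (x y : X) : R.restrictedPerm x y x = R.op x y :=
  R.restrictedPerm_apply_of_sameOrbit (R.sameOrbit_refl x) y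

lemma restrictedPerm_congr {x x' y y' : X} (hx : R.SameOrbit x x') (hy : R.SameOrbit y y') :
    R.restrictedPerm x y = R.restrictedPerm x' y' := by
  ext z
  by_cases h : R.SameOrbit x z
  · rw [R.restrictedPerm_apply_of_sameOrbit h,
      R.restrictedPerm_apply_of_sameOrbit (hx.symm.trans h), R.op_eq_op_of_sameOrbit hy]
  · have h' : ¬ R.SameOrbit x' z := fun h' => h (hx.trans h')
    rw [R.restrictedPerm_apply_of_not_sameOrbit h, R.restrictedPerm_apply_of_not_sameOrbit h']

lemma restrictedPerm_commute (x y y' : X) :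
    Commute (R.restrictedPerm x y) (R.restrictedPerm x y') := by
  ext z
  by_cases h : R.SameOrbit x z
  · simp only [Perm.mul_apply, R.restrictedPerm_apply_of_sameOrbit h,
      R.restrictedPerm_apply_of_sameOrbit (h.trans (R.sameOrbit_op z _)), R.abelian]
  · simp only [Perm.mul_apply, R.restrictedPerm_apply_of_not_sameOrbit h]

lemma exists_mem_closure_restrictedPerm_apply_eq {x a b : X} (ha : R.SameOrbit x a)
    (hb : R.SameOrbit x b) : ∃ g ∈ closure (Set.range (R.restrictedPerm x)), g a = b := by
  obtain ⟨g, hg, rfl⟩ := ha.symm.trans hb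
  obtain ⟨g', hg', hgg'⟩ := exists_mem_closure_eqOn (T := Set.range (R.restrictedPerm x))
    (s := {z | R.SameOrbit x z})
    (fun g hg _ hz => (R.sameOrbit_apply_right_iff hg).2 hz)
    (by
      rintro _ ⟨y, rfl⟩
      exact ⟨_, ⟨y, rfl⟩, fun _ hz => R.restrictedPerm_apply_of_sameOrbit hz y⟩)
    hg
  exact ⟨g', hg', hgg' ha⟩

lemma apply_eq_self_of_mem_closure_restrictedPerm {x : X} {g : Perm X}
    (hg : g ∈ closure (Set.range (R.restrictedPerm x))) {a b : X} (ha : R.SameOrbit x a)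
    (hb : R.SameOrbit x b) (hfix : g a = a) : g b = b := by
  have : IsMulCommutative (closure (Set.range (R.restrictedPerm x))) := by
    refine isMulCommutative_closure ?_
    rintro _ ⟨y, rfl⟩ _ ⟨y', rfl⟩
    exact R.restrictedPerm_commute x y y'
  exact apply_eq_self_of_isMulCommutative (s := {z | R.SameOrbit x z})
    (fun _ ha _ hb => R.exists_mem_closure_restrictedPerm_apply_eq ha hb) hg ha hb hfix

noncomputable def toData : AbelianRackData X where
  rel := R.SameOrbit
  equiv := R.sameOrbit_equivalence
  f := R.restrictedPerm
  congr _ _ _ _ := R.restrictedPerm_congr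
  fix_outside x y _ h := R.restrictedPerm_apply_of_not_sameOrbit h y
  maps_class x y z h := by
    rw [R.restrictedPerm_apply_of_sameOrbit h]
    exact h.trans (R.sameOrbit_op z y)
  comm x y y' := R.restrictedPerm_commute x y y'
  trans _ _ _ := R.exists_mem_closure_restrictedPerm_apply_eq
  free := by
    rintro x g hg ⟨a, ha, hfix⟩ b hb
    exact R.apply_eq_self_of_mem_closure_restrictedPerm hg ha hb hfix

lemma op_self_iff :
    (∀ x, R.op x x = x) ↔ ∀ x z, R.SameOrbit x z → R.restrictedPerm x x z = z := by
  refine ⟨fun hq x z h => ?_, fun h x => ?_⟩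
  · rw [R.restrictedPerm_apply_of_sameOrbit h, R.op_eq_op_of_sameOrbit h, hq]
  · rw [← R.restrictedPerm_self_apply, h x x (R.sameOrbit_refl x)]

end AbelianRack

namespace AbelianRackData

variable {X : Type*} (D : AbelianRackData X)

lemma f_eq_of_rel {x x' : X} (h : D.rel x x') (y : X) : D.f x' y = D.f x y :=
  D.congr x' x y y (D.equiv.symm h) (D.equiv.refl y)

lemma f_apply_comm (x y y' z : X) : D.f x y (D.f x y' z) = D.f x y' (D.f x y z) :=
  Perm.ext_iff.mp (D.comm x y y') z

def op (x y : X) : X := D.f x y x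

lemma rel_op (x y : X) : D.rel x (D.op x y) := D.maps_class x y x (D.equiv.refl x)

lemma op_op (x y z : X) : D.op (D.op x y) z = D.f x z (D.op x y) := by
  rw [op, D.f_eq_of_rel (D.rel_op x y)]

lemma op_injective (y : X) : Function.Injective (D.op · y) := by
  intro a b (h : D.op a y = D.op b y)
  have hab : D.rel a b := D.equiv.trans (D.rel_op a y) (h ▸ D.equiv.symm (D.rel_op b y))
  exact (D.f a y).injective (by rwa [op, op, D.f_eq_of_rel hab] at h)

def toRack [Finite X] : AbelianRack X where
  op := D.op
  self_distrib x y z := by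
    rw [D.op_op, D.op_op, D.congr x x _ y (D.equiv.refl x) (D.equiv.symm (D.rel_op y z))]
    exact D.f_apply_comm x z y x
  bij y := Finite.injective_iff_bijective.mp (D.op_injective y)
  abelian a b c := by
    rw [D.op_op, D.op_op]
    exact D.f_apply_comm a c b a

variable [Finite X]

lemma sameOrbit_toRack_iff {x z : X} : D.toRack.SameOrbit x z ↔ D.rel x z := by
  constructor
  · rintro ⟨g, hg, rfl⟩
    refine D.equiv.rel_apply_of_mem_closure ?_ hg x
    rintro _ ⟨y, rfl⟩ w
    exact D.rel_op w y
  · intro h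
    obtain ⟨g, hg, rfl⟩ := D.trans x x z (D.equiv.refl x) h
    refine D.toRack.sameOrbit_equivalence.rel_apply_of_mem_closure ?_ hg x
    rintro _ ⟨y, rfl⟩ w
    by_cases hw : D.rel x w
    · rw [← D.f_eq_of_rel hw]
      exact D.toRack.sameOrbit_op w y
    · rw [D.fix_outside x y w hw]
      exact D.toRack.sameOrbit_refl w

lemma restrictedPerm_toRack (x y : X) : D.toRack.restrictedPerm x y = D.f x y := by
  ext z
  by_cases h : D.rel x z
  · rw [D.toRack.restrictedPerm_apply_of_sameOrbit (D.sameOrbit_toRack_iff.2 h),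
      ← D.f_eq_of_rel h y]
    rfl
  · rw [D.toRack.restrictedPerm_apply_of_not_sameOrbit (mt D.sameOrbit_toRack_iff.1 h),
      D.fix_outside x y z h]

end AbelianRackData

noncomputable def AbelianRack.equivData (X : Type*) [Finite X] :
    AbelianRack X ≃ AbelianRackData X where
  toFun R := R.toData
  invFun D := D.toRack
  left_inv R := AbelianRack.ext (funext₂ R.restrictedPerm_self_apply)
  right_inv D := AbelianRackData.ext (funext₂ fun _ _ => propext D.sameOrbit_toRack_iff)
    (funext₂ D.restrictedPerm_toRack)

/-- Finite abelian racks on `X` are in one-to-one correspondence with partitions of `X`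
together with families of permutations `f_{ij}` as above; under the correspondence the
rack operation is `x ◁ y = f_{[x][y]}(x)`, and the rack is a quandle (`x ◁ x = x`)
exactly when each `f_{ii}` is the identity on its part. -/
theorem abelianRack_classification (X : Type*) [Fintype X] :
    ∃ e : AbelianRack X ≃ AbelianRackData X,
      (∀ R : AbelianRack X, ∀ x y : X, R.op x y = (e R).f x y x) ∧
      (∀ R : AbelianRack X,
        (∀ x, R.op x x = x) ↔ ∀ x z, (e R).rel x z → (e R).f x x z = z) :=
  ⟨AbelianRack.equivData X, fun R x y => (R.restrictedPerm_self_apply x y).symm,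
    fun R => R.op_self_iff⟩
end

section
/- Given a partition X = X₁ ⊔ ⋯ ⊔ X_r of a set X and permutations f_{ij} ∈ Sym(X_i) for 1 ≤ i, j ≤ r with f_{ij} f_{ik} = f_{ik} f_{ij} for all i, j, k, the binary operation defined by x ◁ y = f_{ij}(x) when x ∈ X_i and y ∈ X_j makes (X, ◁) a rack, and this rack is abelian. -/
/-- Given a partition of `X` (fibers of `ind : X → ι`) and permutations `f i j` of the
part `ind⁻¹(i)` with `f i j ∘ f i k = f i k ∘ f i j`, the operation
`x ◁ y = f (ind x) (ind y) x` makes `X` a rack, and this rack is abelian. -/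
theorem partition_data_gives_abelian_rack {X ι : Type*} (ind : X → ι)
    (f : (i : ι) → ι → Equiv.Perm {x : X // ind x = i})
    (hcomm : ∀ i j k, f i j * f i k = f i k * f i j)
    (op : X → X → X)
    (hop : ∀ x y : X, op x y = ((f (ind x) (ind y)) ⟨x, rfl⟩ : {z : X // ind z = ind x})) :
    (∀ x y z, op (op x y) z = op (op x z) (op y z)) ∧
    (∀ y, Function.Bijective fun x => op x y) ∧
    (∀ a b c, op (op a b) c = op (op a c) b) := by
  -- generalized form of hop
  have aux : ∀ (x y : X) (i : ι) (hx : ind x = i),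
      op x y = ((f i (ind y)) ⟨x, hx⟩ : {z : X // ind z = i}).val := by
    intro x y i hx
    subst hx
    exact hop x y
  have hind : ∀ x y : X, ind (op x y) = ind x := by
    intro x y
    rw [hop x y]
    exact ((f (ind x) (ind y)) ⟨x, rfl⟩).prop
  -- op (op x y) z as application of two perms
  have key : ∀ x y z : X,
      op (op x y) z = ((f (ind x) (ind z)) ((f (ind x) (ind y)) ⟨x, rfl⟩)).val := by
    intro x y z
    rw [aux (op x y) z (ind x) (hind x y)]
    congr 1
    apply congrArg
    exact Subtype.ext (hop x y)
  have comm : ∀ (i j k : ι) (v : {z : X // ind z = i}),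
      (f i j) ((f i k) v) = (f i k) ((f i j) v) := by
    intro i j k v
    have := congrArg (fun g => g v) (congrArg Equiv.toFun (hcomm i j k))
    exact this
  refine ⟨?_, ?_, ?_⟩
  · intro x y z
    rw [key x y z, key x z (op y z), hind y z, comm]
  · intro y
    constructor
    · intro a b hab
      simp only [] at hab
      have ha : ind a = ind b := by
        have := congrArg ind hab
        simpa [hind] using this
      rw [aux a y (ind b) ha, aux b y (ind b) rfl] at hab
      have := (f (ind b) (ind y)).injective (Subtype.ext hab)
      exact congrArg Subtype.val this
    · intro z
      refine ⟨(((f (ind z) (ind y))⁻¹) ⟨z, rfl⟩).val, ?_⟩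
      simp only
      rw [aux _ y (ind z) (((f (ind z) (ind y))⁻¹) ⟨z, rfl⟩).prop]
      have : (⟨(((f (ind z) (ind y))⁻¹) ⟨z, rfl⟩).val,
          (((f (ind z) (ind y))⁻¹) ⟨z, rfl⟩).prop⟩ : {w : X // ind w = ind z}) =
          ((f (ind z) (ind y))⁻¹) ⟨z, rfl⟩ := rfl
      rw [this]
      simp
  · intro a b c
    rw [key a b c, key a c b, comm]
end

section
/- Let (X, r) be a bijective non-degenerate solution of the Yang–Baxter equation. Define a relation ∼ on X by x ∼ y if and only if λ_x = λ_y and ρ_x = ρ_y. Then ∼ is an equivalence relation and r induces a well-defined bijective non-degenerate solution r̄ on the quotient X̄ = X/∼ given by r̄(x̄, ȳ) = (λ_x(y)‾, ρ_y(x)‾). -/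
section RetractAux

variable {X : Type*} {lam rho : X → X → X}

private lemma ret_A1 (hlam : ∀ x, Function.Bijective (lam x))
    (hC1 : ∀ x y z, lam x (lam y z) = lam (lam x y) (lam (rho y x) z))
    {y y' : X} (hl : lam y = lam y') (hr : rho y = rho y') (x : X) :
    lam (lam x y) = lam (lam x y') := by
  funext w
  obtain ⟨z, hz⟩ := (hlam (rho y x)).2 w
  have h1 := hC1 x y z
  have h2 := hC1 x y' z
  rw [← hl, ← hr] at h2
  rw [← hz, ← h1, h2]

private lemma ret_A2 (hrho : ∀ x, Function.Bijective (rho x))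
    (hC3 : ∀ x y z, rho x (rho y z) = rho (rho x y) (rho (lam y x) z))
    {y y' : X} (hr : rho y = rho y') (x : X) :
    rho (lam x y) = rho (lam x y') := by
  funext z
  have h1 := hC3 y x z
  have h2 := hC3 y' x z
  rw [← hr] at h2
  exact (hrho (rho y x)).1 (h1.symm.trans h2)

private lemma ret_A3 (hlam : ∀ x, Function.Bijective (lam x))
    (hC1 : ∀ x y z, lam x (lam y z) = lam (lam x y) (lam (rho y x) z))
    {y y' : X} (hl : lam y = lam y') (x : X) :
    lam (rho x y) = lam (rho x y') := by
  funext z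
  have h1 := hC1 y x z
  have h2 := hC1 y' x z
  rw [← hl] at h2
  exact (hlam (lam y x)).1 (h1.symm.trans h2)

private lemma ret_A4 (hrho : ∀ x, Function.Bijective (rho x))
    (hC3 : ∀ x y z, rho x (rho y z) = rho (rho x y) (rho (lam y x) z))
    {y y' : X} (hl : lam y = lam y') (hr : rho y = rho y') (x : X) :
    rho (rho x y) = rho (rho x y') := by
  funext w
  obtain ⟨z, hz⟩ := (hrho (lam y x)).2 w
  have h1 := hC3 x y z
  have h2 := hC3 x y' z
  rw [← hl, ← hr] at h2
  rw [← hz, ← h1, h2]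

private lemma ret_B1 (hlam : ∀ x, Function.Bijective (lam x))
    (hrho : ∀ x, Function.Bijective (rho x))
    (hC1 : ∀ x y z, lam x (lam y z) = lam (lam x y) (lam (rho y x) z))
    (hC2 : ∀ x y z, lam (rho (lam x y) z) (rho y x) = rho (lam (rho x z) y) (lam z x))
    (hC3 : ∀ x y z, rho x (rho y z) = rho (rho x y) (rho (lam y x) z))
    {x y y' : X} (hal : lam (lam x y) = lam (lam x y'))
    (har : rho (lam x y) = rho (lam x y')) :
    lam y = lam y' ∧ rho y = rho y' := by
  obtain ⟨z0, hz0⟩ := (hrho x).2 x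
  have h1 := hC2 x y z0
  have h2 := hC2 x y' z0
  rw [hz0] at h1 h2
  rw [← har] at h2
  -- h1 : lam (rho (lam x y) z0) (rho y x) = rho (lam x y) (lam z0 x)
  -- h2 : lam (rho (lam x y) z0) (rho y' x) = rho (lam x y) (lam z0 x)
  have hb : rho y x = rho y' x := (hlam (rho (lam x y) z0)).1 (h1.trans h2.symm)
  constructor
  · funext z
    have h3 := hC1 x y z
    have h4 := hC1 x y' z
    rw [← hal, ← hb] at h4
    exact (hlam x).1 (h3.trans h4.symm)
  · funext w
    obtain ⟨z, hz⟩ := (hrho x).2 w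
    have h5 := hC3 y x z
    have h6 := hC3 y' x z
    rw [← hb, ← har] at h6
    rw [← hz]
    exact h5.trans h6.symm

private lemma ret_B2 (hlam : ∀ x, Function.Bijective (lam x))
    (hrho : ∀ x, Function.Bijective (rho x))
    (hC1 : ∀ x y z, lam x (lam y z) = lam (lam x y) (lam (rho y x) z))
    (hC2 : ∀ x y z, lam (rho (lam x y) z) (rho y x) = rho (lam (rho x z) y) (lam z x))
    (hC3 : ∀ x y z, rho x (rho y z) = rho (rho x y) (rho (lam y x) z))
    {x y y' : X} (hal : lam (rho x y) = lam (rho x y'))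
    (har : rho (rho x y) = rho (rho x y')) :
    lam y = lam y' ∧ rho y = rho y' := by
  obtain ⟨z0, hz0⟩ := (hlam x).2 x
  have h1 := hC2 x z0 y
  have h2 := hC2 x z0 y'
  rw [hz0] at h1 h2
  rw [← hal] at h2
  -- h1 : lam (rho x y) (rho z0 x) = rho (lam (rho x y) z0) (lam y x)
  -- h2 : lam (rho x y) (rho z0 x) = rho (lam (rho x y) z0) (lam y' x)
  have hb : lam y x = lam y' x := (hrho (lam (rho x y) z0)).1 (h1.symm.trans h2)
  constructor
  · funext w
    obtain ⟨z, hz⟩ := (hlam x).2 w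
    have h5 := hC1 y x z
    have h6 := hC1 y' x z
    rw [← hb, ← hal] at h6
    rw [← hz]
    exact h5.trans h6.symm
  · funext z
    have h3 := hC3 x y z
    have h4 := hC3 x y' z
    rw [← har, ← hb] at h4
    exact (hrho x).1 (h3.trans h4.symm)

end RetractAux

/-- Retract of a bijective non-degenerate solution: the relation `x ∼ y ↔ λ_x = λ_y ∧ ρ_x = ρ_y`
is an equivalence relation, and `r` induces a well-defined bijective non-degenerate solution
on the quotient `X/∼`. -/
theorem retract_is_solution {X : Type*} (lam rho : X → X → X)
    (hlam : ∀ x, Function.Bijective (lam x))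
    (hrho : ∀ x, Function.Bijective (rho x))
    (hrbij : Function.Bijective fun p : X × X => (lam p.1 p.2, rho p.2 p.1))
    (hC1 : ∀ x y z, lam x (lam y z) = lam (lam x y) (lam (rho y x) z))
    (hC2 : ∀ x y z, lam (rho (lam x y) z) (rho y x) = rho (lam (rho x z) y) (lam z x))
    (hC3 : ∀ x y z, rho x (rho y z) = rho (rho x y) (rho (lam y x) z)) :
    let S : Setoid X :=
      ⟨fun x y => lam x = lam y ∧ rho x = rho y,
        ⟨fun _ => ⟨rfl, rfl⟩, fun h => ⟨h.1.symm, h.2.symm⟩,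
          fun h h' => ⟨h.1.trans h'.1, h.2.trans h'.2⟩⟩⟩
    ∃ lamQ rhoQ : Quotient S → Quotient S → Quotient S,
      (∀ x y : X, lamQ (Quotient.mk S x) (Quotient.mk S y) = Quotient.mk S (lam x y)) ∧
      (∀ x y : X, rhoQ (Quotient.mk S x) (Quotient.mk S y) = Quotient.mk S (rho x y)) ∧
      (∀ a, Function.Bijective (lamQ a)) ∧
      (∀ a, Function.Bijective (rhoQ a)) ∧
      Function.Bijective (fun p : Quotient S × Quotient S => (lamQ p.1 p.2, rhoQ p.2 p.1)) ∧
      (∀ x y z, lamQ x (lamQ y z) = lamQ (lamQ x y) (lamQ (rhoQ y x) z)) ∧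
      (∀ x y z, lamQ (rhoQ (lamQ x y) z) (rhoQ y x) = rhoQ (lamQ (rhoQ x z) y) (lamQ z x)) ∧
      (∀ x y z, rhoQ x (rhoQ y z) = rhoQ (rhoQ x y) (rhoQ (lamQ y x) z)) := by
  intro S
  -- compatibility of `lam` with the congruence
  have hcl : ∀ (x₁ y₁ x₂ y₂ : X), S.r x₁ x₂ → S.r y₁ y₂ →
      Quotient.mk S (lam x₁ y₁) = Quotient.mk S (lam x₂ y₂) := by
    rintro x₁ y₁ x₂ y₂ ⟨hx1, hx2⟩ ⟨hy1, hy2⟩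
    have e : lam x₁ y₁ = lam x₂ y₁ := congrFun hx1 y₁
    refine Quotient.sound ?_
    show S.r _ _
    rw [e]
    exact ⟨ret_A1 hlam hC1 hy1 hy2 x₂, ret_A2 hrho hC3 hy2 x₂⟩
  -- compatibility of `rho` with the congruence
  have hcr : ∀ (x₁ y₁ x₂ y₂ : X), S.r x₁ x₂ → S.r y₁ y₂ →
      Quotient.mk S (rho x₁ y₁) = Quotient.mk S (rho x₂ y₂) := by
    rintro x₁ y₁ x₂ y₂ ⟨hx1, hx2⟩ ⟨hy1, hy2⟩
    have e : rho x₁ y₁ = rho x₂ y₁ := congrFun hx2 y₁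
    refine Quotient.sound ?_
    show S.r _ _
    rw [e]
    exact ⟨ret_A3 hlam hC1 hy1 x₂, ret_A4 hrho hC3 hy1 hy2 x₂⟩
  refine ⟨fun a b => Quotient.liftOn₂ a b (fun x y => Quotient.mk S (lam x y))
      (fun a₁ b₁ a₂ b₂ h1 h2 => hcl a₁ b₁ a₂ b₂ h1 h2),
    fun a b => Quotient.liftOn₂ a b (fun x y => Quotient.mk S (rho x y))
      (fun a₁ b₁ a₂ b₂ h1 h2 => hcr a₁ b₁ a₂ b₂ h1 h2),
    fun _ _ => rfl, fun _ _ => rfl, ?_, ?_, ?_, ?_, ?_, ?_⟩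
  · -- lamQ bijective
    intro a
    refine Quotient.inductionOn a fun x => ⟨fun b c => Quotient.inductionOn₂ b c
      fun y y' h => ?_, fun c => Quotient.inductionOn c fun w => ?_⟩
    · have h2 : Quotient.mk S (lam x y) = Quotient.mk S (lam x y') := h
      obtain ⟨hE1, hE2⟩ := Quotient.exact h2
      obtain ⟨hl', hr'⟩ := ret_B1 hlam hrho hC1 hC2 hC3 hE1 hE2
      exact Quotient.sound ⟨hl', hr'⟩
    · obtain ⟨y, hy⟩ := (hlam x).2 w
      exact ⟨Quotient.mk S y, congrArg (Quotient.mk S) hy⟩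
  · -- rhoQ bijective
    intro a
    refine Quotient.inductionOn a fun x => ⟨fun b c => Quotient.inductionOn₂ b c
      fun y y' h => ?_, fun c => Quotient.inductionOn c fun w => ?_⟩
    · have h2 : Quotient.mk S (rho x y) = Quotient.mk S (rho x y') := h
      obtain ⟨hE1, hE2⟩ := Quotient.exact h2
      obtain ⟨hl', hr'⟩ := ret_B2 hlam hrho hC1 hC2 hC3 hE1 hE2
      exact Quotient.sound ⟨hl', hr'⟩
    · obtain ⟨y, hy⟩ := (hrho x).2 w
      exact ⟨Quotient.mk S y, congrArg (Quotient.mk S) hy⟩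
  · -- pair map bijective
    constructor
    · rintro ⟨a, b⟩ ⟨c, d⟩ h
      have h1 := congrArg Prod.fst h
      have h2 := congrArg Prod.snd h
      clear h
      revert h1 h2
      refine Quotient.inductionOn₂ a b fun x y => Quotient.inductionOn₂ c d
        fun x' y' => fun h1 h2 => ?_
      have e1 : Quotient.mk S (lam x y) = Quotient.mk S (lam x' y') := h1
      have e2 : Quotient.mk S (rho y x) = Quotient.mk S (rho y' x') := h2
      obtain ⟨hu1, hu2⟩ := Quotient.exact e1
      obtain ⟨ha1, ha2⟩ := Quotient.exact e2
      obtain ⟨y'', hy''⟩ := (hlam x').2 (lam x y)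
      have hBy : lam y'' = lam y' ∧ rho y'' = rho y' := by
        refine ret_B1 hlam hrho hC1 hC2 hC3 (x := x') ?_ ?_
        · rw [hy'']; exact hu1
        · rw [hy'']; exact hu2
      obtain ⟨hy1, hy2⟩ := hBy
      have ha2' : rho y'' x' = rho y' x' := congrFun hy2 x'
      obtain ⟨x₂, hx₂⟩ := (hrho y'').2 (rho y x)
      have hBx : lam x₂ = lam x' ∧ rho x₂ = rho x' := by
        refine ret_B2 hlam hrho hC1 hC2 hC3 (x := y'') ?_ ?_
        · rw [hx₂, ha2']; exact ha1
        · rw [hx₂, ha2']; exact ha2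
      obtain ⟨hx1, hx2'⟩ := hBx
      have hpair : ((x : X), y) = (x₂, y'') := by
        apply hrbij.1
        show (lam x y, rho y x) = (lam x₂ y'', rho y'' x₂)
        have e3 : lam x₂ y'' = lam x y := by rw [congrFun hx1 y'', hy'']
        rw [hx₂, e3]
      have hxx : x = x₂ := congrArg Prod.fst hpair
      have hyy : y = y'' := congrArg Prod.snd hpair
      rw [Prod.mk.injEq]
      constructor
      · exact Quotient.sound ⟨by rw [hxx, hx1], by rw [hxx, hx2']⟩
      · exact Quotient.sound ⟨by rw [hyy, hy1], by rw [hyy, hy2]⟩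
    · rintro ⟨a, b⟩
      refine Quotient.inductionOn₂ a b fun u v => ?_
      obtain ⟨⟨x, y⟩, hp⟩ := hrbij.2 (u, v)
      have h1 : lam x y = u := congrArg Prod.fst hp
      have h2 : rho y x = v := congrArg Prod.snd hp
      refine ⟨(Quotient.mk S x, Quotient.mk S y), ?_⟩
      show (Quotient.mk S (lam x y), Quotient.mk S (rho y x))
        = (Quotient.mk S u, Quotient.mk S v)
      rw [h1, h2]
  · -- C1 on the quotient
    intro a b c
    refine Quotient.inductionOn₃ a b c fun x y z => ?_
    exact congrArg (Quotient.mk S) (hC1 x y z)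
  · -- C2 on the quotient
    intro a b c
    refine Quotient.inductionOn₃ a b c fun x y z => ?_
    exact congrArg (Quotient.mk S) (hC2 x y z)
  · -- C3 on the quotient
    intro a b c
    refine Quotient.inductionOn₃ a b c fun x y z => ?_
    exact congrArg (Quotient.mk S) (hC3 x y z)
end

section
/- Let (X, r) be a bijective non-degenerate solution of the YBE, with induced (anti-)homomorphisms λ, ρ : G(X, r) → Sym(X) and similarly λ̂, ρ̂ for the inverse solution (X, r⁻¹). Then Ker(λ) ∩ Ker(ρ) = Ker(λ̂) ∩ Ker(ρ̂), and the three permutation groups G_gen(X,r) = ⟨(λ_x, ρ_x⁻¹, λ̂_x, ρ̂_x⁻¹) : x ∈ X⟩ ⊆ Sym(X)⁴, G_{λ,ρ}(X,r) = ⟨(λ_x, ρ_x⁻¹) : x ∈ X⟩ ⊆ Sym(X)², and G_{λ,λ̂}(X,r) = ⟨(λ_x, λ̂_x) : x ∈ X⟩ ⊆ Sym(X)² are pairwise isomorphic. -/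
section Aux

variable {X : Type*}

/-- Core X-level lemma: the diagonal maps `T x = λ_x⁻¹ x` and `S x = ρ_x⁻¹ x` are
surjective and intertwine the hatted maps with the unhatted ones. -/
theorem yb_core (lam rho lamh rhoh : X → X → X)
    (hlam : ∀ x, Function.Bijective (lam x))
    (hrho : ∀ x, Function.Bijective (rho x))
    (hC1 : ∀ x y z, lam x (lam y z) = lam (lam x y) (lam (rho y x) z))
    (hC2 : ∀ x y z, lam (rho (lam x y) z) (rho y x) = rho (lam (rho x z) y) (lam z x))
    (hC3 : ∀ x y z, rho x (rho y z) = rho (rho x y) (rho (lam y x) z))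
    (hinv1 : ∀ x y, lamh (lam x y) (rho y x) = x ∧ rhoh (rho y x) (lam x y) = y) :
    ∃ T S : X → X, Function.Surjective T ∧ Function.Surjective S ∧
      (∀ u x, lamh u (T (rho u x)) = T x) ∧ (∀ u x, rhoh u (S (lam u x)) = S x) := by
  classical
  set L : X → X ≃ X := fun x => Equiv.ofBijective (lam x) (hlam x) with hL
  set R : X → X ≃ X := fun x => Equiv.ofBijective (rho x) (hrho x) with hR
  set T : X → X := fun x => (L x).symm x with hTdef
  set S : X → X := fun x => (R x).symm x with hSdef
  have hT : ∀ x, lam x (T x) = x := fun x => (L x).apply_symm_apply x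
  have hS : ∀ x, rho x (S x) = x := fun x => (R x).apply_symm_apply x
  have hTu : ∀ z w, lam z w = z → T z = w := by
    intro z w h
    have : (L z).symm (lam z w) = w := (L z).symm_apply_apply w
    rw [h] at this; exact this
  have hSu : ∀ z w, rho z w = z → S z = w := by
    intro z w h
    have : (R z).symm (rho z w) = w := (R z).symm_apply_apply w
    rw [h] at this; exact this
  have hA'' : ∀ a b, T (lam a b) = lam (rho b a) (T b) := by
    intro a b
    apply hTu
    have := (hC1 a b (T b)).symm
    rw [hT b] at this; exact this
  have hD' : ∀ a b, S (rho b a) = rho (lam a b) (S a) := by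
    intro a b
    apply hSu
    have := (hC3 b a (S a)).symm
    rw [hS a] at this; exact this
  have hF2 : ∀ x c, lam (rho (T x) x) c = lam (T x) c := by
    intro x c
    have h := hC1 x (T x) c
    rw [hT x] at h
    exact ((hlam x).1 h).symm
  have hG2 : ∀ x c, rho (lam (S x) x) c = rho (S x) c := by
    intro x c
    have h := hC3 x (S x) c
    rw [hS x] at h
    exact ((hrho x).1 h).symm
  have hTrho : ∀ x q, T (rho (lam (T x) q) x) = rho q (T x) := by
    intro x q
    apply hTu
    have h := hC2 (T x) q x
    rw [hT x, hF2 x q] at h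
    exact h
  have hSlam : ∀ x q, S (lam (rho (S x) q) x) = lam q (S x) := by
    intro x q
    apply hSu
    have h := hC2 (S x) x q
    rw [hS x, hG2 x q] at h
    exact h.symm
  refine ⟨T, S, ?_, ?_, ?_, ?_⟩
  · intro y
    refine ⟨lam (S y) y, ?_⟩
    rw [hA'' (S y) y, hS y, hT y]
  · intro y
    refine ⟨rho (T y) y, ?_⟩
    rw [hD' y (T y), hT y, hS y]
  · intro u x
    have hu : lam (T x) ((L (T x)).symm u) = u := (L (T x)).apply_symm_apply u
    calc lamh u (T (rho u x))
        = lamh (lam (T x) ((L (T x)).symm u))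
            (T (rho (lam (T x) ((L (T x)).symm u)) x)) := by rw [hu]
      _ = lamh (lam (T x) ((L (T x)).symm u)) (rho ((L (T x)).symm u) (T x)) := by
            rw [hTrho x ((L (T x)).symm u)]
      _ = T x := (hinv1 (T x) ((L (T x)).symm u)).1
  · intro u x
    have hu : rho (S x) ((R (S x)).symm u) = u := (R (S x)).apply_symm_apply u
    calc rhoh u (S (lam u x))
        = rhoh (rho (S x) ((R (S x)).symm u))
            (S (lam (rho (S x) ((R (S x)).symm u)) x)) := by rw [hu]
      _ = rhoh (rho (S x) ((R (S x)).symm u)) (lam ((R (S x)).symm u) (S x)) := by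
            rw [hSlam x ((R (S x)).symm u)]
      _ = S x := (hinv1 ((R (S x)).symm u) (S x)).2

/-- The inverse solution satisfies the same Yang–Baxter component conditions. -/
theorem yb_hatC (lam rho lamh rhoh : X → X → X)
    (hC1 : ∀ x y z, lam x (lam y z) = lam (lam x y) (lam (rho y x) z))
    (hC2 : ∀ x y z, lam (rho (lam x y) z) (rho y x) = rho (lam (rho x z) y) (lam z x))
    (hC3 : ∀ x y z, rho x (rho y z) = rho (rho x y) (rho (lam y x) z))
    (hinv1 : ∀ x y, lamh (lam x y) (rho y x) = x ∧ rhoh (rho y x) (lam x y) = y)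
    (hinv2 : ∀ u v, lam (lamh u v) (rhoh v u) = u ∧ rho (rhoh v u) (lamh u v) = v) :
    (∀ x y z, lamh x (lamh y z) = lamh (lamh x y) (lamh (rhoh y x) z)) ∧
    (∀ x y z, lamh (rhoh (lamh x y) z) (rhoh y x) = rhoh (lamh (rhoh x z) y) (lamh z x)) ∧
    (∀ x y z, rhoh x (rhoh y z) = rhoh (rhoh x y) (rhoh (lamh y x) z)) := by
  classical
  set e1 : Equiv.Perm (X × X × X) :=
    { toFun := fun p => (lam p.1 p.2.1, rho p.2.1 p.1, p.2.2)
      invFun := fun p => (lamh p.1 p.2.1, rhoh p.2.1 p.1, p.2.2)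
      left_inv := by
        rintro ⟨x, y, z⟩
        exact Prod.ext (hinv1 x y).1 (Prod.ext (hinv1 x y).2 rfl)
      right_inv := by
        rintro ⟨x, y, z⟩
        exact Prod.ext (hinv2 x y).1 (Prod.ext (hinv2 x y).2 rfl) } with he1
  set e2 : Equiv.Perm (X × X × X) :=
    { toFun := fun p => (p.1, lam p.2.1 p.2.2, rho p.2.2 p.2.1)
      invFun := fun p => (p.1, lamh p.2.1 p.2.2, rhoh p.2.2 p.2.1)
      left_inv := by
        rintro ⟨x, y, z⟩
        exact Prod.ext rfl (Prod.ext (hinv1 y z).1 (hinv1 y z).2)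
      right_inv := by
        rintro ⟨x, y, z⟩
        exact Prod.ext rfl (Prod.ext (hinv2 y z).1 (hinv2 y z).2) } with he2
  have hbr : e1 * e2 * e1 = e2 * e1 * e2 := by
    apply Equiv.ext
    rintro ⟨x, y, z⟩
    show e1 (e2 (e1 (x, y, z))) = e2 (e1 (e2 (x, y, z)))
    show (lam (lam x y) (lam (rho y x) z), rho (lam (rho y x) z) (lam x y), rho z (rho y x))
       = (lam x (lam y z), lam (rho (lam y z) x) (rho z y), rho (rho z y) (rho (lam y z) x))
    exact Prod.ext (hC1 x y z).symm (Prod.ext (hC2 y z x).symm (hC3 z y x))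
  have hbrinv : e1⁻¹ * e2⁻¹ * e1⁻¹ = e2⁻¹ * e1⁻¹ * e2⁻¹ := by
    have h := congrArg Inv.inv hbr
    simpa [mul_inv_rev, mul_assoc] using h
  have hpt : ∀ p : X × X × X,
      (e1⁻¹ * e2⁻¹ * e1⁻¹) p = (e2⁻¹ * e1⁻¹ * e2⁻¹) p := fun p => by rw [hbrinv]
  have hcomp : ∀ x y z : X,
      (lamh (lamh x y) (lamh (rhoh y x) z), rhoh (lamh (rhoh y x) z) (lamh x y),
        rhoh z (rhoh y x))
      = (lamh x (lamh y z), lamh (rhoh (lamh y z) x) (rhoh z y),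
        rhoh (rhoh z y) (rhoh (lamh y z) x)) := by
    intro x y z
    exact hpt (x, y, z)
  refine ⟨?_, ?_, ?_⟩
  · intro x y z
    exact (congrArg Prod.fst (hcomp x y z)).symm
  · intro x y z
    exact (congrArg (fun p => p.2.1) (hcomp z x y)).symm
  · intro x y z
    exact congrArg (fun p => p.2.2) (hcomp z y x)

/-- Lifting an intertwining relation from generators to the whole group. -/
theorem yb_key {G : Type*} [Group G] {ι : X → G}
    (hgen : Subgroup.closure (Set.range ι) = ⊤)
    (α β : G →* Equiv.Perm X) (F : X → X)
    (hbase : ∀ u y, α (ι u) (F y) = F (β (ι u) y)) :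
    ∀ g y, α g (F y) = F (β g y) := by
  have main : ∀ g, g ∈ Subgroup.closure (Set.range ι) →
      ∀ y, α g (F y) = F (β g y) := by
    intro g hg
    induction hg using Subgroup.closure_induction with
    | mem x hx => obtain ⟨u, rfl⟩ := hx; exact hbase u
    | one => intro y; simp
    | mul a b ha hb iha ihb =>
        intro y
        rw [map_mul, map_mul, Equiv.Perm.mul_apply, ihb, iha, Equiv.Perm.mul_apply]
    | inv a ha iha =>
        intro y
        have hba : β a (β a⁻¹ y) = y := by
          rw [← Equiv.Perm.mul_apply, ← map_mul, mul_inv_cancel, map_one, Equiv.Perm.one_apply]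
        have h := iha (β a⁻¹ y)
        rw [hba] at h
        have h3 : (α a)⁻¹ (F y) = F (β a⁻¹ y) := by
          rw [← h, ← Equiv.Perm.mul_apply, inv_mul_cancel, Equiv.Perm.one_apply]
        rw [map_inv, map_inv, h3, map_inv]
  intro g
  exact main g (hgen ▸ Subgroup.mem_top g)

/-- Range of a hom on a group generated by `Set.range ι`. -/
theorem yb_range {G H : Type*} [Group G] [Group H] {ι : X → G}
    (hgen : Subgroup.closure (Set.range ι) = ⊤) (f : G →* H) :
    f.range = Subgroup.closure (Set.range fun x => f (ι x)) := by
  rw [MonoidHom.range_eq_map, ← hgen, MonoidHom.map_closure, ← Set.range_comp]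
  rfl

end Aux

/-- For a bijective non-degenerate solution `(X, r)` with inverse solution `(X, r⁻¹)`:
`Ker(λ) ∩ Ker(ρ) = Ker(λ̂) ∩ Ker(ρ̂)` in the structure group `G`, and the permutation
groups `G_gen = ⟨(λ_x, ρ_x⁻¹, λ̂_x, ρ̂_x⁻¹)⟩ ≤ Sym(X)⁴`, `G_{λ,ρ} = ⟨(λ_x, ρ_x⁻¹)⟩ ≤ Sym(X)²`
and `G_{λ,λ̂} = ⟨(λ_x, λ̂_x)⟩ ≤ Sym(X)²` are pairwise isomorphic. -/
theorem permutation_groups_isomorphic {X G : Type*} [Group G]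
    (lam rho lamh rhoh : X → X → X)
    (hlam : ∀ x, Function.Bijective (lam x))
    (hrho : ∀ x, Function.Bijective (rho x))
    (hlamh : ∀ x, Function.Bijective (lamh x))
    (hrhoh : ∀ x, Function.Bijective (rhoh x))
    (hC1 : ∀ x y z, lam x (lam y z) = lam (lam x y) (lam (rho y x) z))
    (hC2 : ∀ x y z, lam (rho (lam x y) z) (rho y x) = rho (lam (rho x z) y) (lam z x))
    (hC3 : ∀ x y z, rho x (rho y z) = rho (rho x y) (rho (lam y x) z))
    (hinv1 : ∀ x y, lamh (lam x y) (rho y x) = x ∧ rhoh (rho y x) (lam x y) = y)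
    (hinv2 : ∀ u v, lam (lamh u v) (rhoh v u) = u ∧ rho (rhoh v u) (lamh u v) = v)
    -- the structure group together with the induced (anti-)homomorphisms
    (ι : X → G) (hgen : Subgroup.closure (Set.range ι) = ⊤)
    (hrel : ∀ x y, ι x * ι y = ι (lam x y) * ι (rho y x))
    (Λ Λh : G →* Equiv.Perm X)
    (hΛ : ∀ x, Λ (ι x) = Equiv.ofBijective (lam x) (hlam x))
    (hΛh : ∀ x, Λh (ι x) = Equiv.ofBijective (lamh x) (hlamh x))
    (P Ph : G → Equiv.Perm X)
    (hP1 : P 1 = 1) (hPanti : ∀ g h : G, P (g * h) = P h * P g)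
    (hPh1 : Ph 1 = 1) (hPhanti : ∀ g h : G, Ph (g * h) = Ph h * Ph g)
    (hPval : ∀ x, P (ι x) = Equiv.ofBijective (rho x) (hrho x))
    (hPhval : ∀ x, Ph (ι x) = Equiv.ofBijective (rhoh x) (hrhoh x)) :
    ({a : G | Λ a = 1} ∩ {a : G | P a = 1} = {a : G | Λh a = 1} ∩ {a : G | Ph a = 1}) ∧
    (let Ggen : Subgroup (Equiv.Perm X × Equiv.Perm X × Equiv.Perm X × Equiv.Perm X) :=
      Subgroup.closure (Set.range fun x : X =>
        (Equiv.ofBijective (lam x) (hlam x), (Equiv.ofBijective (rho x) (hrho x))⁻¹,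
         Equiv.ofBijective (lamh x) (hlamh x), (Equiv.ofBijective (rhoh x) (hrhoh x))⁻¹))
     let Glr : Subgroup (Equiv.Perm X × Equiv.Perm X) :=
      Subgroup.closure (Set.range fun x : X =>
        (Equiv.ofBijective (lam x) (hlam x), (Equiv.ofBijective (rho x) (hrho x))⁻¹))
     let Gll : Subgroup (Equiv.Perm X × Equiv.Perm X) :=
      Subgroup.closure (Set.range fun x : X =>
        (Equiv.ofBijective (lam x) (hlam x), Equiv.ofBijective (lamh x) (hlamh x)))
     Nonempty (Ggen ≃* Glr) ∧ Nonempty (Glr ≃* Gll) ∧ Nonempty (Ggen ≃* Gll)) := by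
  classical
  -- diagonal maps for the solution and its inverse
  obtain ⟨T, S, hTsurj, hSsurj, hA, hB⟩ :=
    yb_core lam rho lamh rhoh hlam hrho hC1 hC2 hC3 hinv1
  obtain ⟨hC1h, hC2h, hC3h⟩ := yb_hatC lam rho lamh rhoh hC1 hC2 hC3 hinv1 hinv2
  obtain ⟨Th, Sh, hThsurj, hShsurj, hAh, hBh⟩ :=
    yb_core lamh rhoh lam rho hlamh hrhoh hC1h hC2h hC3h (fun x y => hinv2 x y)
  -- the anti-homomorphisms, inverted, as homomorphisms
  have hPinv : ∀ g : G, P g⁻¹ = (P g)⁻¹ := by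
    intro g
    have h := hPanti g g⁻¹
    rw [mul_inv_cancel, hP1] at h
    exact eq_inv_of_mul_eq_one_left h.symm
  have hPhinv : ∀ g : G, Ph g⁻¹ = (Ph g)⁻¹ := by
    intro g
    have h := hPhanti g g⁻¹
    rw [mul_inv_cancel, hPh1] at h
    exact eq_inv_of_mul_eq_one_left h.symm
  set Pinv : G →* Equiv.Perm X :=
    MonoidHom.mk' (fun g => (P g)⁻¹)
      (fun a b => by show (P (a * b))⁻¹ = (P a)⁻¹ * (P b)⁻¹; rw [hPanti, mul_inv_rev]) with hPinvdef
  set Phinv : G →* Equiv.Perm X :=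
    MonoidHom.mk' (fun g => (Ph g)⁻¹)
      (fun a b => by show (Ph (a * b))⁻¹ = (Ph a)⁻¹ * (Ph b)⁻¹; rw [hPhanti, mul_inv_rev]) with hPhinvdef
  have hPinvapp : ∀ g, Pinv g = (P g)⁻¹ := fun g => rfl
  have hPhinvapp : ∀ g, Phinv g = (Ph g)⁻¹ := fun g => rfl
  -- the four intertwining facts
  have fact1 : ∀ g y, Λh g (T y) = T (Pinv g y) := by
    refine yb_key hgen Λh Pinv T ?_
    intro u y
    have e := Equiv.ofBijective (rho u) (hrho u)
    have hy : rho u ((Equiv.ofBijective (rho u) (hrho u)).symm y) = y :=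
      (Equiv.ofBijective (rho u) (hrho u)).apply_symm_apply y
    have h := hA u ((Equiv.ofBijective (rho u) (hrho u)).symm y)
    rw [hy] at h
    rw [hΛh u]
    show lamh u (T y) = T (Pinv (ι u) y)
    rw [h, hPinvapp, hPval u]
    rfl
  have fact2 : ∀ g y, Phinv g (S y) = S (Λ g y) := by
    refine yb_key hgen Phinv Λ S ?_
    intro u y
    have h := hB u y
    rw [hPhinvapp, hPhval u, hΛ u]
    show (Equiv.ofBijective (rhoh u) (hrhoh u)).symm (S y) = S (lam u y)
    rw [← h]
    exact (Equiv.ofBijective (rhoh u) (hrhoh u)).symm_apply_apply _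
  have fact3 : ∀ g y, Λ g (Th y) = Th (Phinv g y) := by
    refine yb_key hgen Λ Phinv Th ?_
    intro u y
    have hy : rhoh u ((Equiv.ofBijective (rhoh u) (hrhoh u)).symm y) = y :=
      (Equiv.ofBijective (rhoh u) (hrhoh u)).apply_symm_apply y
    have h := hAh u ((Equiv.ofBijective (rhoh u) (hrhoh u)).symm y)
    rw [hy] at h
    rw [hΛ u]
    show lam u (Th y) = Th (Phinv (ι u) y)
    rw [h, hPhinvapp, hPhval u]
    rfl
  have fact4 : ∀ g y, Pinv g (Sh y) = Sh (Λh g y) := by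
    refine yb_key hgen Pinv Λh Sh ?_
    intro u y
    have h := hBh u y
    rw [hPinvapp, hPval u, hΛh u]
    show (Equiv.ofBijective (rho u) (hrho u)).symm (Sh y) = Sh (lamh u y)
    rw [← h]
    exact (Equiv.ofBijective (rho u) (hrho u)).symm_apply_apply _
  -- kernel implications
  have k1 : ∀ g : G, P g = 1 → Λh g = 1 := by
    intro g hg
    apply Equiv.ext
    intro z
    obtain ⟨y, rfl⟩ := hTsurj z
    rw [fact1 g y, hPinvapp, hg, inv_one, Equiv.Perm.one_apply, Equiv.Perm.one_apply]
  have k2 : ∀ g : G, Λ g = 1 → Ph g = 1 := by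
    intro g hg
    rw [← inv_eq_one]
    apply Equiv.ext
    intro z
    obtain ⟨y, rfl⟩ := hSsurj z
    have h := fact2 g y
    rw [hg, Equiv.Perm.one_apply] at h
    rw [Equiv.Perm.one_apply]
    exact h
  have k3 : ∀ g : G, Ph g = 1 → Λ g = 1 := by
    intro g hg
    apply Equiv.ext
    intro z
    obtain ⟨y, rfl⟩ := hThsurj z
    rw [fact3 g y, hPhinvapp, hg, inv_one, Equiv.Perm.one_apply, Equiv.Perm.one_apply]
  have k4 : ∀ g : G, Λh g = 1 → P g = 1 := by
    intro g hg
    rw [← inv_eq_one]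
    apply Equiv.ext
    intro z
    obtain ⟨y, rfl⟩ := hShsurj z
    have h := fact4 g y
    rw [hg, Equiv.Perm.one_apply] at h
    rw [Equiv.Perm.one_apply]
    exact h
  constructor
  · ext a
    constructor
    · rintro ⟨h1, h2⟩
      exact ⟨k1 a h2, k2 a h1⟩
    · rintro ⟨h1, h2⟩
      exact ⟨k3 a h2, k4 a h1⟩
  · intro Ggen Glr Gll
    set Φ : G →* Equiv.Perm X × Equiv.Perm X × Equiv.Perm X × Equiv.Perm X :=
      Λ.prod (Pinv.prod (Λh.prod Phinv)) with hΦ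
    set Φ12 : G →* Equiv.Perm X × Equiv.Perm X := Λ.prod Pinv with hΦ12
    set Φ13 : G →* Equiv.Perm X × Equiv.Perm X := Λ.prod Λh with hΦ13
    have hG1 : Φ.range = Ggen := by
      rw [yb_range hgen Φ]
      congr 1
      apply congrArg Set.range
      funext u
      show (Λ (ι u), Pinv (ι u), Λh (ι u), Phinv (ι u)) = _
      rw [hΛ u, hΛh u, hPinvapp, hPhinvapp, hPval u, hPhval u]
    have hG2 : Φ12.range = Glr := by
      rw [yb_range hgen Φ12]
      congr 1
      apply congrArg Set.range
      funext u
      show (Λ (ι u), Pinv (ι u)) = _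
      rw [hΛ u, hPinvapp, hPval u]
    have hG3 : Φ13.range = Gll := by
      rw [yb_range hgen Φ13]
      congr 1
      apply congrArg Set.range
      funext u
      show (Λ (ι u), Λh (ι u)) = _
      rw [hΛ u, hΛh u]
    have hmem : ∀ g : G, Φ g = 1 ↔ (Λ g = 1 ∧ P g = 1 ∧ Λh g = 1 ∧ Ph g = 1) := by
      intro g
      show (Λ g, Pinv g, Λh g, Phinv g) = (1, 1, 1, 1) ↔ _
      rw [Prod.ext_iff, Prod.ext_iff, Prod.ext_iff]
      rw [hPinvapp, hPhinvapp, inv_eq_one, inv_eq_one]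
    have hker12 : Φ.ker = Φ12.ker := by
      ext g
      rw [MonoidHom.mem_ker, MonoidHom.mem_ker, hmem g]
      show _ ↔ (Λ g, Pinv g) = (1, 1)
      rw [Prod.ext_iff, hPinvapp, inv_eq_one]
      constructor
      · rintro ⟨h1, h2, _, _⟩; exact ⟨h1, h2⟩
      · rintro ⟨h1, h2⟩; exact ⟨h1, h2, k1 g h2, k2 g h1⟩
    have hker13 : Φ.ker = Φ13.ker := by
      ext g
      rw [MonoidHom.mem_ker, MonoidHom.mem_ker, hmem g]
      show _ ↔ (Λ g, Λh g) = (1, 1)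
      rw [Prod.ext_iff]
      constructor
      · rintro ⟨h1, _, h3, _⟩; exact ⟨h1, h3⟩
      · rintro ⟨h1, h3⟩; exact ⟨h1, k4 g h3, h3, k2 g h1⟩
    have iso1 : Ggen ≃* Glr :=
      (MulEquiv.subgroupCongr hG1.symm).trans
        (((QuotientGroup.quotientKerEquivRange Φ).symm.trans
          (QuotientGroup.quotientMulEquivOfEq hker12)).trans
          ((QuotientGroup.quotientKerEquivRange Φ12).trans (MulEquiv.subgroupCongr hG2)))
    have iso2 : Glr ≃* Gll :=
      (MulEquiv.subgroupCongr hG2.symm).trans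
        (((QuotientGroup.quotientKerEquivRange Φ12).symm.trans
          (QuotientGroup.quotientMulEquivOfEq (hker12.symm.trans hker13))).trans
          ((QuotientGroup.quotientKerEquivRange Φ13).trans (MulEquiv.subgroupCongr hG3)))
    exact ⟨⟨iso1⟩, ⟨iso2⟩, ⟨iso1.trans iso2⟩⟩
end

section
/- Let (X, r) be a bijective non-degenerate solution of the Yang–Baxter equation with |X| > 1 that is a multipermutation solution of finite level. If r has finite order, then the order of r is even. -/
/-- The `n`-th iterated retract relation of a solution `(X, r)`, `r(x,y) = (λ_x(y), ρ_y(x))`: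
`x ∼₀ y` iff `x = y`, and `x ∼_{n+1} y` iff `λ_x` and `λ_y` (resp. `ρ_x` and `ρ_y`) agree
modulo `∼_n`. The solution has multipermutation level `≤ m` iff `∼_m` is the total relation,
i.e. `Ret^m(X, r)` is a singleton. -/
def mrel {X : Type*} (lam rho : X → X → X) : ℕ → X → X → Prop
  | 0 => Eq
  | n + 1 => fun x y =>
      (∀ z, mrel lam rho n (lam x z) (lam y z)) ∧ ∀ z, mrel lam rho n (rho x z) (rho y z)

namespace MPAux

variable {Y : Type*}

theorem mrel_zero_iff {lam rho : Y → Y → Y} {x y : Y} : mrel lam rho 0 x y ↔ x = y := Iff.rfl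

theorem mrel_succ_iff {lam rho : Y → Y → Y} {n : ℕ} {x y : Y} :
    mrel lam rho (n + 1) x y ↔
      (∀ z, mrel lam rho n (lam x z) (lam y z)) ∧ ∀ z, mrel lam rho n (rho x z) (rho y z) :=
  Iff.rfl

theorem descend {P : ℕ → Prop} (step : ∀ k, P (k + 1) → P k) : ∀ M, P M → P 0
  | 0, h => h
  | M + 1, h => descend step M (step M h)

/-- Cross compatibility: if `ρ_a = ρ_b` then `ρ_{λ_x a} = ρ_{λ_x b}`, by descent along
`mrel` levels using the middle YB condition. -/
theorem lemA (lam rho : Y → Y → Y)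
    (hC2 : ∀ x y z, lam (rho (lam x y) z) (rho y x) = rho (lam (rho x z) y) (lam z x))
    (hrS : Function.Surjective fun p : Y × Y => (lam p.1 p.2, rho p.2 p.1))
    (M : ℕ) (hm : ∀ x y, mrel lam rho M x y)
    {a b : Y} (hab : ∀ z, rho a z = rho b z) :
    ∀ x z, rho (lam x a) z = rho (lam x b) z := by
  have step : ∀ k, (∀ x z, mrel lam rho (k + 1) (rho (lam x a) z) (rho (lam x b) z)) →
      ∀ x z, mrel lam rho k (rho (lam x a) z) (rho (lam x b) z) := by
    intro k H u v
    obtain ⟨⟨z, x⟩, hp⟩ := hrS (v, u)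
    have h1 : lam z x = v := congrArg Prod.fst hp
    have h2 : rho x z = u := congrArg Prod.snd hp
    have h := (mrel_succ_iff.mp (H x z)).1 (rho a x)
    rw [hC2 x a z] at h
    rw [hab x] at h
    rw [hC2 x b z] at h
    rw [h1, h2] at h
    exact h
  have main := descend (P := fun k => ∀ x z,
      mrel lam rho k (rho (lam x a) z) (rho (lam x b) z)) step M (fun x z => hm _ _)
  exact fun x z => mrel_zero_iff.mp (main x z)

/-- Cross compatibility: if `λ_a = λ_b` then `λ_{ρ_x a} = λ_{ρ_x b}`. -/
theorem lemB (lam rho : Y → Y → Y)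
    (hC2 : ∀ x y z, lam (rho (lam x y) z) (rho y x) = rho (lam (rho x z) y) (lam z x))
    (hrS : Function.Surjective fun p : Y × Y => (lam p.1 p.2, rho p.2 p.1))
    (M : ℕ) (hm : ∀ x y, mrel lam rho M x y)
    {a b : Y} (hab : ∀ z, lam a z = lam b z) :
    ∀ x z, lam (rho x a) z = lam (rho x b) z := by
  have step : ∀ k, (∀ x z, mrel lam rho (k + 1) (lam (rho x a) z) (lam (rho x b) z)) →
      ∀ x z, mrel lam rho k (lam (rho x a) z) (lam (rho x b) z) := by
    intro k H u v
    obtain ⟨⟨x, y⟩, hp⟩ := hrS (u, v)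
    have h1 : lam x y = u := congrArg Prod.fst hp
    have h2 : rho y x = v := congrArg Prod.snd hp
    have h := (mrel_succ_iff.mp (H x y)).2 (lam a x)
    rw [← hC2 x y a] at h
    rw [hab x] at h
    rw [← hC2 x y b] at h
    rw [h1, h2] at h
    exact h
  have main := descend (P := fun k => ∀ x z,
      mrel lam rho k (lam (rho x a) z) (lam (rho x b) z)) step M (fun x z => hm _ _)
  exact fun x z => mrel_zero_iff.mp (main x z)

theorem lemE1 (lam rho : Y → Y → Y)
    (hC1 : ∀ x y z, lam x (lam y z) = lam (lam x y) (lam (rho y x) z))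
    (hlamS : ∀ x, Function.Surjective (lam x))
    {a b : Y} (hab1 : ∀ z, lam a z = lam b z) (hab2 : ∀ z, rho a z = rho b z) :
    ∀ x z, lam (lam x a) z = lam (lam x b) z := by
  intro x z
  obtain ⟨w, hw⟩ := hlamS (rho a x) z
  rw [← hw, ← hC1 x a w, hab1 w, hab2 x, ← hC1 x b w]

theorem lemE2 (lam rho : Y → Y → Y)
    (hC3 : ∀ x y z, rho x (rho y z) = rho (rho x y) (rho (lam y x) z))
    (hrhoS : ∀ x, Function.Surjective (rho x))
    {a b : Y} (hab1 : ∀ z, lam a z = lam b z) (hab2 : ∀ z, rho a z = rho b z) :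
    ∀ x z, rho (rho x a) z = rho (rho x b) z := by
  intro x z
  obtain ⟨w, hw⟩ := hrhoS (lam a x) z
  rw [← hw, ← hC3 x a w, hab2 w, hab1 x, ← hC3 x b w]



universe u

theorem aux (n : ℕ) (hn : Odd n) :
    ∀ (m : ℕ) (Y : Type u) (lam rho : Y → Y → Y),
      (∀ x, Function.Surjective (lam x)) →
      (∀ x, Function.Surjective (rho x)) →
      (Function.Surjective fun p : Y × Y => (lam p.1 p.2, rho p.2 p.1)) →
      (∀ x y z, lam x (lam y z) = lam (lam x y) (lam (rho y x) z)) →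
      (∀ x y z, lam (rho (lam x y) z) (rho y x) = rho (lam (rho x z) y) (lam z x)) →
      (∀ x y z, rho x (rho y z) = rho (rho x y) (rho (lam y x) z)) →
      (∀ x y, mrel lam rho m x y) →
      (fun p : Y × Y => (lam p.1 p.2, rho p.2 p.1))^[n] = id →
      ∀ a b : Y, a = b := by
  intro m
  induction m with
  | zero => intro Y lam rho _ _ _ _ _ _ hm _ a b; exact hm a b
  | succ m ih =>
    intro Y lam rho hlamS hrhoS hrS hC1 hC2 hC3 hm hord a b
    letI s : Setoid Y :=
      ⟨fun p q => (∀ z, lam p z = lam q z) ∧ (∀ z, rho p z = rho q z),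
        ⟨fun _ => ⟨fun _ => rfl, fun _ => rfl⟩,
         fun h => ⟨fun z => (h.1 z).symm, fun z => (h.2 z).symm⟩,
         fun h h' => ⟨fun z => (h.1 z).trans (h'.1 z), fun z => (h.2 z).trans (h'.2 z)⟩⟩⟩
    have compatLam : ∀ (x : Y) {p q : Y}, p ≈ q → lam x p ≈ lam x q := by
      intro x p q hpq
      exact ⟨fun z => lemE1 lam rho hC1 hlamS hpq.1 hpq.2 x z,
             fun z => lemA lam rho hC2 hrS (m + 1) hm hpq.2 x z⟩
    have compatRho : ∀ (x : Y) {p q : Y}, p ≈ q → rho x p ≈ rho x q := by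
      intro x p q hpq
      exact ⟨fun z => lemB lam rho hC2 hrS (m + 1) hm hpq.1 x z,
             fun z => lemE2 lam rho hC3 hrhoS hpq.1 hpq.2 x z⟩
    let lam' : Quotient s → Quotient s → Quotient s :=
      Quotient.map₂ lam (by
        intro p p' hp q q' hq
        have h1 : lam p q = lam p' q := hp.1 q
        show lam p q ≈ lam p' q'
        rw [h1]
        exact compatLam p' hq)
    let rho' : Quotient s → Quotient s → Quotient s :=
      Quotient.map₂ rho (by
        intro p p' hp q q' hq
        have h1 : rho p q = rho p' q := hp.2 q
        show rho p q ≈ rho p' q'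
        rw [h1]
        exact compatRho p' hq)
    have lam'_mk : ∀ x y : Y, lam' ⟦x⟧ ⟦y⟧ = ⟦lam x y⟧ := fun _ _ => rfl
    have rho'_mk : ∀ x y : Y, rho' ⟦x⟧ ⟦y⟧ = ⟦rho x y⟧ := fun _ _ => rfl
    have hlamS' : ∀ qx, Function.Surjective (lam' qx) := by
      intro qx qy
      refine Quotient.inductionOn₂ qx qy (fun x y => ?_)
      obtain ⟨w, hw⟩ := hlamS x y
      exact ⟨⟦w⟧, by rw [lam'_mk, hw]⟩
    have hrhoS' : ∀ qx, Function.Surjective (rho' qx) := by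
      intro qx qy
      refine Quotient.inductionOn₂ qx qy (fun x y => ?_)
      obtain ⟨w, hw⟩ := hrhoS x y
      exact ⟨⟦w⟧, by rw [rho'_mk, hw]⟩
    have hrS' : Function.Surjective
        (fun p : Quotient s × Quotient s => (lam' p.1 p.2, rho' p.2 p.1)) := by
      rintro ⟨qu, qv⟩
      refine Quotient.inductionOn₂ qu qv (fun u v => ?_)
      obtain ⟨⟨x, y⟩, hp⟩ := hrS (u, v)
      have h1 : lam x y = u := congrArg Prod.fst hp
      have h2 : rho y x = v := congrArg Prod.snd hp
      refine ⟨(⟦x⟧, ⟦y⟧), ?_⟩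
      show (lam' ⟦x⟧ ⟦y⟧, rho' ⟦y⟧ ⟦x⟧) = (⟦u⟧, ⟦v⟧)
      rw [lam'_mk, rho'_mk, h1, h2]
    have hC1' : ∀ x y z, lam' x (lam' y z) = lam' (lam' x y) (lam' (rho' y x) z) := by
      intro qx qy qz
      refine Quotient.inductionOn₃ qx qy qz (fun x y z => ?_)
      show (⟦lam x (lam y z)⟧ : Quotient s) = ⟦lam (lam x y) (lam (rho y x) z)⟧
      rw [hC1]
    have hC2' : ∀ x y z,
        lam' (rho' (lam' x y) z) (rho' y x) = rho' (lam' (rho' x z) y) (lam' z x) := by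
      intro qx qy qz
      refine Quotient.inductionOn₃ qx qy qz (fun x y z => ?_)
      show (⟦lam (rho (lam x y) z) (rho y x)⟧ : Quotient s) = ⟦rho (lam (rho x z) y) (lam z x)⟧
      rw [hC2]
    have hC3' : ∀ x y z, rho' x (rho' y z) = rho' (rho' x y) (rho' (lam' y x) z) := by
      intro qx qy qz
      refine Quotient.inductionOn₃ qx qy qz (fun x y z => ?_)
      show (⟦rho x (rho y z)⟧ : Quotient s) = ⟦rho (rho x y) (rho (lam y x) z)⟧
      rw [hC3]
    have htrans : ∀ (k : ℕ) (x y : Y),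
        mrel lam rho (k + 1) x y → mrel lam' rho' k ⟦x⟧ ⟦y⟧ := by
      intro k
      induction k with
      | zero =>
        intro x y h
        exact Quotient.sound ⟨(mrel_succ_iff.mp h).1, (mrel_succ_iff.mp h).2⟩
      | succ k ihk =>
        intro x y h
        refine mrel_succ_iff.mpr ⟨?_, ?_⟩
        · intro qz
          refine Quotient.inductionOn qz (fun z => ?_)
          have hz := ihk _ _ ((mrel_succ_iff.mp h).1 z)
          rw [lam'_mk, lam'_mk]
          exact hz
        · intro qz
          refine Quotient.inductionOn qz (fun z => ?_)
          have hz := ihk _ _ ((mrel_succ_iff.mp h).2 z)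
          rw [rho'_mk, rho'_mk]
          exact hz
    have comm : ∀ (j : ℕ) (x y : Y),
        (fun p : Quotient s × Quotient s => (lam' p.1 p.2, rho' p.2 p.1))^[j] (⟦x⟧, ⟦y⟧)
          = (⟦((fun p : Y × Y => (lam p.1 p.2, rho p.2 p.1))^[j] (x, y)).1⟧,
             ⟦((fun p : Y × Y => (lam p.1 p.2, rho p.2 p.1))^[j] (x, y)).2⟧) := by
      intro j
      induction j with
      | zero => intro x y; rfl
      | succ j ihj =>
        intro x y
        rw [Function.iterate_succ_apply', Function.iterate_succ_apply', ihj]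
        rfl
    have hord' : (fun p : Quotient s × Quotient s => (lam' p.1 p.2, rho' p.2 p.1))^[n] = id := by
      funext qp
      obtain ⟨qx, qy⟩ := qp
      refine Quotient.inductionOn₂ qx qy (fun x y => ?_)
      rw [comm n x y, hord]
      rfl
    have hQ := ih (Quotient s) lam' rho' hlamS' hrhoS' hrS' hC1' hC2' hC3'
      (fun qx qy => Quotient.inductionOn₂ qx qy (fun x y => htrans m x y (hm x y))) hord'
    have mrel1 : ∀ x y : Y, (∀ z, lam x z = lam y z) ∧ (∀ z, rho x z = rho y z) :=
      fun x y => Quotient.exact (hQ ⟦x⟧ ⟦y⟧)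
    have hlc : ∀ x x' y : Y, lam x y = lam x' y := fun x x' y => (mrel1 x x').1 y
    have hrc : ∀ x x' y : Y, rho x y = rho x' y := fun x x' y => (mrel1 x x').2 y
    let f : Y × Y → Y × Y := fun p => (lam p.1 p.2, rho p.2 p.1)
    have hordf : f^[n] = id := hord
    have key1 : ∀ p q : Y × Y, p.2 = q.2 → (f p).1 = (f q).1 := by
      intro p q h
      show lam p.1 p.2 = lam q.1 q.2
      rw [← h]
      exact hlc _ _ _
    have key2 : ∀ p q : Y × Y, p.1 = q.1 → (f p).2 = (f q).2 := by
      intro p q h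
      show rho p.2 p.1 = rho q.2 q.1
      rw [← h]
      exact hrc _ _ _
    have par : ∀ (j : ℕ), ∀ (x x' y y' : Y),
        (Even j → ((f^[j] (x, y)).1 = (f^[j] (x, y')).1 ∧
                   (f^[j] (x, y)).2 = (f^[j] (x', y)).2)) ∧
        (Odd j → ((f^[j] (x, y)).1 = (f^[j] (x', y)).1 ∧
                  (f^[j] (x, y)).2 = (f^[j] (x, y')).2)) := by
      intro j
      induction j with
      | zero =>
        intro x x' y y'
        exact ⟨fun _ => ⟨rfl, rfl⟩, fun h => absurd h (by simp [Nat.odd_iff])⟩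
      | succ j ihj =>
        intro x x' y y'
        constructor
        · intro hev
          have hodd : Odd j := Nat.not_even_iff_odd.mp (Nat.even_add_one.mp hev)
          obtain ⟨h1, h2⟩ := (ihj x x' y y').2 hodd
          refine ⟨?_, ?_⟩
          · rw [Function.iterate_succ_apply', Function.iterate_succ_apply']
            exact key1 _ _ h2
          · rw [Function.iterate_succ_apply', Function.iterate_succ_apply']
            exact key2 _ _ h1
        · intro hodd
          have hev : Even j := Nat.not_odd_iff_even.mp (Nat.odd_add_one.mp hodd)
          obtain ⟨h1, h2⟩ := (ihj x x' y y').1 hev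
          refine ⟨?_, ?_⟩
          · rw [Function.iterate_succ_apply', Function.iterate_succ_apply']
            exact key1 _ _ h2
          · rw [Function.iterate_succ_apply', Function.iterate_succ_apply']
            exact key2 _ _ h1
    have e1 : (f^[n] (a, b)).1 = a := by rw [hordf]; rfl
    have e2 : (f^[n] (b, b)).1 = b := by rw [hordf]; rfl
    have hfin := ((par n a b b b).2 hn).1
    rw [e1, e2] at hfin
    exact hfin

end MPAux

/-- If `(X, r)` is a bijective non-degenerate multipermutation solution of finite level
with `|X| > 1`, then any finite order of `r` is even. -/
theorem multipermutation_solution_even_order {X : Type*} [Nontrivial X]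
    (lam rho : X → X → X)
    (hlam : ∀ x, Function.Bijective (lam x))
    (hrho : ∀ x, Function.Bijective (rho x))
    (hrbij : Function.Bijective fun p : X × X => (lam p.1 p.2, rho p.2 p.1))
    (hC1 : ∀ x y z, lam x (lam y z) = lam (lam x y) (lam (rho y x) z))
    (hC2 : ∀ x y z, lam (rho (lam x y) z) (rho y x) = rho (lam (rho x z) y) (lam z x))
    (hC3 : ∀ x y z, rho x (rho y z) = rho (rho x y) (rho (lam y x) z))
    (hmpl : ∃ m, ∀ x y : X, mrel lam rho m x y) :
    ∀ n : ℕ, 0 < n →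
      (fun p : X × X => (lam p.1 p.2, rho p.2 p.1))^[n] = id → Even n := by
  intro n _ hord
  by_contra hev
  have hodd : Odd n := Nat.not_even_iff_odd.mp hev
  obtain ⟨m, hm⟩ := hmpl
  obtain ⟨a, b, hab⟩ := exists_pair_ne X
  exact hab (MPAux.aux n hodd m X lam rho (fun x => (hlam x).2) (fun x => (hrho x).2)
    hrbij.2 hC1 hC2 hC3 hm hord a b)
end

section
/- Let (X, r) be a bijective non-degenerate solution of the Yang–Baxter equation of multipermutation level 1 that is injective (i.e., the natural map X → G(X, r) is injective). Then r is involutive: r² = id on X². -/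
/-- The defining relations of the structure group of the level-1 solution
`r(x,y) = (σ(y), τ(x))`: `x ∘ y = σ(y) ∘ τ(x)`. -/
def levelOneRels {X : Type*} (σ τ : Equiv.Perm X) : Set (FreeGroup X) :=
  {w | ∃ x y : X,
    w = FreeGroup.of x * FreeGroup.of y * (FreeGroup.of (σ y) * FreeGroup.of (τ x))⁻¹}

theorem levelOneRels_of_mul_of {X : Type*} (σ τ : Equiv.Perm X) (x y : X) :
    (PresentedGroup.of x : PresentedGroup (levelOneRels σ τ)) * PresentedGroup.of y
      = PresentedGroup.of (σ y) * PresentedGroup.of (τ x) :=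
  PresentedGroup.mk_eq_mk_of_mul_inv_mem ⟨x, y, rfl⟩

/-- The relation at `(x, σ⁻¹ x)` reads `x ∘ σ⁻¹ x = x ∘ τ x`; cancelling `x` identifies the
generators `σ⁻¹ x` and `τ x`. -/
theorem eq_inv_of_levelOneRels_of_injective {X : Type*} {σ τ : Equiv.Perm X}
    (hinj : Function.Injective
      (PresentedGroup.of : X → PresentedGroup (levelOneRels σ τ))) :
    τ = σ⁻¹ := by
  ext x
  have hrel := levelOneRels_of_mul_of σ τ x (σ⁻¹ x)
  rw [Equiv.Perm.coe_inv, Equiv.apply_symm_apply] at hrel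
  exact hinj (mul_left_cancel hrel).symm

theorem injective_level_one_involutive_general {X : Type*} (σ τ : Equiv.Perm X)
    (hinj : Function.Injective
      (PresentedGroup.of : X → PresentedGroup (levelOneRels σ τ))) :
    ∀ p : X × X,
      (fun q : X × X => (σ q.2, τ q.1)) ((fun q : X × X => (σ q.2, τ q.1)) p) = p := by
  obtain rfl := eq_inv_of_levelOneRels_of_injective hinj
  rintro ⟨x, y⟩
  simp

/-- An injective multipermutation solution of level 1 (i.e. `r(x,y) = (σ(y), τ(x))` with
`σ, τ` commuting permutations, such that the natural map from `X` to the structure group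
is injective) is involutive: `r² = id`. -/
theorem injective_level_one_involutive {X : Type*} (σ τ : Equiv.Perm X)
    (hcomm : σ * τ = τ * σ)
    (hinj : Function.Injective
      (PresentedGroup.of : X → PresentedGroup (levelOneRels σ τ))) :
    ∀ p : X × X,
      (fun q : X × X => (σ q.2, τ q.1)) ((fun q : X × X => (σ q.2, τ q.1)) p) = p :=
  injective_level_one_involutive_general σ τ hinj
end

section
/- Let φ : (X, r) → (Y, s) be a surjective morphism of bijective non-degenerate solutions of the Yang–Baxter equation. Then φ induces a surjective morphism of solutions φ̄ : Ret(X, r) → Ret(Y, s) between the retracts. Consequently, if (X, r) has finite multipermutation level m, then any homomorphic image of (X, r) has finite multipermutation level at most m. -/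
/-- A surjective morphism of solutions `φ : (X, r) → (Y, s)` induces a surjective morphism
of retracts (encoded by `∼₁`-compatibility of `φ`), and consequently a homomorphic image of
a multipermutation solution of level `m` has multipermutation level at most `m`. -/
theorem surjective_morphism_retract {X Y : Type*}
    (lamX rhoX : X → X → X) (lamY rhoY : Y → Y → Y)
    (hlamX : ∀ x, Function.Bijective (lamX x))
    (hrhoX : ∀ x, Function.Bijective (rhoX x))
    (hC1X : ∀ x y z, lamX x (lamX y z) = lamX (lamX x y) (lamX (rhoX y x) z))
    (hC2X : ∀ x y z,
      lamX (rhoX (lamX x y) z) (rhoX y x) = rhoX (lamX (rhoX x z) y) (lamX z x))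
    (hC3X : ∀ x y z, rhoX x (rhoX y z) = rhoX (rhoX x y) (rhoX (lamX y x) z))
    (hlamY : ∀ y, Function.Bijective (lamY y))
    (hrhoY : ∀ y, Function.Bijective (rhoY y))
    (hC1Y : ∀ x y z, lamY x (lamY y z) = lamY (lamY x y) (lamY (rhoY y x) z))
    (hC2Y : ∀ x y z,
      lamY (rhoY (lamY x y) z) (rhoY y x) = rhoY (lamY (rhoY x z) y) (lamY z x))
    (hC3Y : ∀ x y z, rhoY x (rhoY y z) = rhoY (rhoY x y) (rhoY (lamY y x) z))
    (φ : X → Y) (hsurj : Function.Surjective φ)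
    (hmorlam : ∀ x z, φ (lamX x z) = lamY (φ x) (φ z))
    (hmorrho : ∀ x z, φ (rhoX x z) = rhoY (φ x) (φ z)) :
    (∀ x y, mrel lamX rhoX 1 x y → mrel lamY rhoY 1 (φ x) (φ y)) ∧
    ∀ m, (∀ x y : X, mrel lamX rhoX m x y) → ∀ a b : Y, mrel lamY rhoY m a b := by
  have key : ∀ n x y, mrel lamX rhoX n x y → mrel lamY rhoY n (φ x) (φ y) := by
    intro n
    induction n with
    | zero => intro x y h; exact congrArg φ h
    | succ n ih =>
      intro x y h
      constructor
      · intro z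
        obtain ⟨w, rfl⟩ := hsurj z
        rw [← hmorlam, ← hmorlam]
        exact ih _ _ (h.1 w)
      · intro z
        obtain ⟨w, rfl⟩ := hsurj z
        rw [← hmorrho, ← hmorrho]
        exact ih _ _ (h.2 w)
  refine ⟨fun x y h => key 1 x y h, fun m h a b => ?_⟩
  obtain ⟨x, rfl⟩ := hsurj a
  obtain ⟨y, rfl⟩ := hsurj b
  exact key m x y (h x y)
end

section
/- Let (X, r) be a bijective non-degenerate solution of the Yang–Baxter equation and (Y, s) a subsolution (Y ⊆ X with r(Y²) ⊆ Y² and s = r|_{Y²}). If (X, r) has finite multipermutation level m, then (Y, s) has finite multipermutation level at most m. -/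
/-- A subsolution of a multipermutation solution of level `m` has multipermutation level
at most `m`. -/
theorem subsolution_multipermutation_level {X : Type*} (lam rho : X → X → X)
    (hlam : ∀ x, Function.Bijective (lam x))
    (hrho : ∀ x, Function.Bijective (rho x))
    (hC1 : ∀ x y z, lam x (lam y z) = lam (lam x y) (lam (rho y x) z))
    (hC2 : ∀ x y z, lam (rho (lam x y) z) (rho y x) = rho (lam (rho x z) y) (lam z x))
    (hC3 : ∀ x y z, rho x (rho y z) = rho (rho x y) (rho (lam y x) z))
    (Y : Set X)
    (hclosed : ∀ x ∈ Y, ∀ y ∈ Y, lam x y ∈ Y ∧ rho x y ∈ Y)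
    (lamY rhoY : Y → Y → Y)
    (hlamY : ∀ a b : Y, (lamY a b : X) = lam a b)
    (hrhoY : ∀ a b : Y, (rhoY a b : X) = rho a b) :
    ∀ m, (∀ x y : X, mrel lam rho m x y) → ∀ a b : Y, mrel lamY rhoY m a b := by
  have key : ∀ n, ∀ a b : Y, mrel lam rho n (a : X) (b : X) → mrel lamY rhoY n a b := by
    intro n
    induction n with
    | zero => intro a b h; exact Subtype.ext h
    | succ n ih =>
      intro a b h
      refine ⟨fun z => ih _ _ ?_, fun z => ih _ _ ?_⟩
      · rw [hlamY, hlamY]; exact h.1 z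
      · rw [hrhoY, hrhoY]; exact h.2 z
  intro m hm a b
  exact key m a b (hm a b)
end

section
/- Let B be a skew left brace. Then the map r_B : B × B → B × B defined by r_B(a, b) = (λ_a(b), ρ_b(a)), where λ_a(b) = −a + a ∘ b and ρ_b(a) = (λ_a(b))⁻¹ ∘ a ∘ b, is a bijective non-degenerate solution of the Yang–Baxter equation. -/
/-- For a skew left brace `(B, +, ∘)`, the map `r_B(a,b) = (λ_a(b), ρ_b(a))`, with
`λ_a(b) = -a + a ∘ b` and `ρ_b(a) = (λ_a(b))⁻¹ ∘ a ∘ b`, is a bijective non-degenerate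
solution of the Yang–Baxter equation. -/
theorem skew_brace_solution {B : Type*} [AddGroup B]
    (mul : B → B → B) (inv : B → B) (e : B)
    (hassoc : ∀ a b c, mul (mul a b) c = mul a (mul b c))
    (hone : ∀ a, mul e a = a ∧ mul a e = a)
    (hinv : ∀ a, mul (inv a) a = e ∧ mul a (inv a) = e)
    (hcompat : ∀ a b c, mul a (b + c) = mul a b - a + mul a c) :
    let lam : B → B → B := fun a b => -a + mul a b
    let rho : B → B → B := fun b a => mul (mul (inv (lam a b)) a) b
    Function.Bijective (fun p : B × B => (lam p.1 p.2, rho p.2 p.1)) ∧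
    (∀ a, Function.Bijective (lam a)) ∧
    (∀ b, Function.Bijective (rho b)) ∧
    (∀ x y z, lam x (lam y z) = lam (lam x y) (lam (rho y x) z)) ∧
    (∀ x y z, lam (rho (lam x y) z) (rho y x) = rho (lam (rho x z) y) (lam z x)) ∧
    (∀ x y z, rho x (rho y z) = rho (rho x y) (rho (lam y x) z)) := by
  intro lam rho
  have hlam : ∀ a b : B, lam a b = -a + mul a b := fun _ _ => rfl
  have hrho : ∀ b a : B, rho b a = mul (mul (inv (lam a b)) a) b := fun _ _ => rfl
  clear_value lam rho
  -- basic facts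
  have hz : ∀ a : B, mul a 0 = a := by
    intro a
    have h := hcompat a 0 0
    rw [add_zero] at h
    have h2 : mul a 0 - a + mul a 0 = 0 + mul a 0 := by rw [zero_add]; exact h.symm
    exact sub_eq_zero.mp (add_right_cancel h2)
  have he : e = 0 := by rw [← (hone 0).1, hz]
  have h1e : ∀ a : B, mul 0 a = a := by intro a; rw [← he]; exact (hone a).1
  have hinvl : ∀ a : B, mul (inv a) a = 0 := by intro a; rw [← he]; exact (hinv a).1
  have hinvr : ∀ a : B, mul a (inv a) = 0 := by intro a; rw [← he]; exact (hinv a).2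
  have hcancel : ∀ u v : B, mul (inv u) (mul u v) = v := by
    intro u v; rw [← hassoc, hinvl, h1e]
  have hcancel2 : ∀ u v : B, mul u (mul (inv u) v) = v := by
    intro u v; rw [← hassoc, hinvr, h1e]
  have hinv0 : inv (0 : B) = 0 := by
    have := hinvl 0; rwa [hz] at this
  have huniq : ∀ x y : B, mul y x = 0 → y = inv x := by
    intro x y h
    have h2 : mul (mul y x) (inv x) = mul 0 (inv x) := by rw [h]
    rw [hassoc, hinvr, hz, h1e] at h2
    exact h2
  have hinvmul : ∀ a b : B, inv (mul a b) = mul (inv b) (inv a) := by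
    intro a b
    symm
    apply huniq
    rw [hassoc, hcancel, hinvl]
  -- lambda facts
  have hlam0 : ∀ a : B, lam a 0 = 0 := by intro a; rw [hlam, hz, neg_add_cancel]
  have hlamz : ∀ b : B, lam 0 b = b := by intro b; rw [hlam, h1e, neg_zero, zero_add]
  have hlamadd : ∀ a b c : B, lam a (b + c) = lam a b + lam a c := by
    intro a b c
    rw [hlam, hlam, hlam, hcompat, sub_eq_add_neg, add_assoc, add_assoc]
  have hlamneg : ∀ a b : B, lam a (-b) = -lam a b := by
    intro a b
    have h := hlamadd a b (-b)
    rw [add_neg_cancel, hlam0] at h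
    exact (neg_eq_of_add_eq_zero_right h.symm).symm
  have hmulab : ∀ a b : B, mul a b = a + lam a b := by
    intro a b; rw [hlam, add_neg_cancel_left]
  have hlamhom : ∀ a b c : B, lam (mul a b) c = lam a (lam b c) := by
    intro a b c
    rw [hlam b c, hlamadd, hlamneg, hlam a b, hlam a (mul b c), hlam (mul a b) c, hassoc,
      neg_add_rev, neg_neg, add_assoc, add_neg_cancel_left]
  have hlaminv : ∀ a b : B, lam (inv a) (lam a b) = b := by
    intro a b; rw [← hlamhom, hinvl, hlamz]
  have hlaminv2 : ∀ a b : B, lam a (lam (inv a) b) = b := by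
    intro a b; rw [← hlamhom, hinvr, hlamz]
  -- key identity: lam a b ∘ rho b a = a ∘ b
  have hkey : ∀ a b : B, mul (lam a b) (rho b a) = mul a b := by
    intro a b; rw [hrho, ← hassoc, hcancel2]
  have hrho_alt : ∀ b a : B, rho b a = mul (inv (lam a b)) (mul a b) := by
    intro b a; rw [hrho, hassoc]
  have hrhohom : ∀ a b c : B, rho c (rho b a) = rho (mul b c) a := by
    intro a b c
    have s1 : mul (lam a b) (lam (rho b a) c) = lam a (mul b c) := by
      rw [hmulab (lam a b) (lam (rho b a) c), ← hlamhom, hkey,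
        hlam a b, hlam (mul a b) c, hlam a (mul b c), hassoc, add_assoc, add_neg_cancel_left]
    rw [hrho_alt c (rho b a), hrho_alt (mul b c) a, ← s1, hinvmul, hassoc]
    congr 1
    rw [hrho, hassoc, hassoc]
  have hrho0 : ∀ a : B, rho 0 a = a := by
    intro a; rw [hrho, hlam0, hinv0, h1e, hz]
  have hrholinv : ∀ b a : B, rho (inv b) (rho b a) = a := by
    intro b a; rw [hrhohom, hinvr, hrho0]
  have hrhorinv : ∀ b a : B, rho b (rho (inv b) a) = a := by
    intro b a; rw [hrhohom, hinvl, hrho0]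
  refine ⟨?_, fun a => Function.bijective_iff_has_inverse.mpr
      ⟨lam (inv a), hlaminv a, hlaminv2 a⟩,
    fun b => Function.bijective_iff_has_inverse.mpr
      ⟨rho (inv b), hrholinv b, hrhorinv b⟩, ?_, ?_, ?_⟩
  · -- bijectivity of r
    apply Function.bijective_iff_has_inverse.mpr
    refine ⟨fun p => (mul p.1 p.2 - p.1, lam (inv (mul p.1 p.2 - p.1)) p.1), ?_, ?_⟩
    · rintro ⟨a, b⟩
      show (mul (lam a b) (rho b a) - lam a b,
        lam (inv (mul (lam a b) (rho b a) - lam a b)) (lam a b)) = (a, b)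
      have h1 : mul (lam a b) (rho b a) - lam a b = a := by
        rw [hkey, hmulab a b, add_sub_cancel_right]
      rw [h1, hlaminv]
    · rintro ⟨u, v⟩
      show (lam (mul u v - u) (lam (inv (mul u v - u)) u),
        rho (lam (inv (mul u v - u)) u) (mul u v - u)) = (u, v)
      have h1 : lam (mul u v - u) (lam (inv (mul u v - u)) u) = u := hlaminv2 _ _
      have h2 : rho (lam (inv (mul u v - u)) u) (mul u v - u) = v := by
        rw [hrho_alt, h1, hmulab (mul u v - u) (lam (inv (mul u v - u)) u), h1,
          sub_add_cancel, hcancel]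
      rw [h1, h2]
  · -- YBE relation 1
    intro x y z
    rw [← hlamhom, ← hlamhom, hkey]
  · -- YBE relation 2
    intro x y z
    have hgg : ∀ w : B, lam (inv w) w = -(inv w) := by
      intro w; rw [hlam, hinvl, add_zero]
    have hg : lam (lam z x) (lam (rho x z) y) = lam z (lam x y) := by
      rw [← hlamhom, hkey, hlamhom]
    have hA : lam (lam z (lam x y)) (lam (rho (lam x y) z) (rho y x))
        = lam z (lam (lam x y) (rho y x)) := by
      rw [← hlamhom, hkey, hlamhom]
    have hB : lam (lam x y) (rho y x) = -(lam x y) + mul x y := by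
      rw [hlam (lam x y) (rho y x), hkey]
    have hC : lam z (-(lam x y) + mul x y)
        = -(lam z (lam x y)) + lam z (mul x y) := by
      rw [hlamadd, hlamneg]
    have hL : lam (rho (lam x y) z) (rho y x)
        = mul (inv (lam z (lam x y))) (lam z (mul x y)) := by
      have h2 := congrArg (lam (inv (lam z (lam x y)))) hA
      rw [hlaminv] at h2
      rw [h2, hB, hC, hlamadd, hlamneg, hgg, neg_neg, ← hmulab]
    have hR : rho (lam (rho x z) y) (lam z x)
        = mul (inv (lam z (lam x y))) (lam z (mul x y)) := by
      rw [hrho_alt, hg]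
      congr 1
      rw [hmulab (lam z x) (lam (rho x z) y), hg, ← hlamadd, ← hmulab]
    rw [hL, hR]
  · -- YBE relation 3
    intro x y z
    rw [hrhohom, hrhohom, hkey]
end
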